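/- The matrix h with rows (0,0,0,1),(0,0,1,1),(1,-1,0,0),(-1,0,0,0) belongs to Sp(4,ℤ) and fixes the point σ₅ = (i/√3)·[[2,1],[1,2]] under the symplectic action, i.e. (Aσ₅+B)(Cσ₅+D)⁻¹ = σ₅, and the matrix N = Cσ₅ + D has eigenvalues i and -i. -/
import Mathlib


open Matrix

/-- The standard symplectic form `J = [[0, I], [-I, 0]]` over ℤ. -/
def symplJ (g : ℕ) : Matrix (Fin g ⊕ Fin g) (Fin g ⊕ Fin g) ℤ :=
  Matrix.fromBlocks 0 1 (-1) 0

/-- The fixed point `σ₅ = (i/√3)·[[2,1],[1,2]]`. -/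
noncomputable def sigma5 : Matrix (Fin 2) (Fin 2) ℂ :=
  (Complex.I / Real.sqrt 3) • !![2, 1; 1, 2]

lemma aux_t_sq : (Complex.I / Real.sqrt 3) * (Complex.I / Real.sqrt 3) = -1/3 := by
  have hs : (Real.sqrt 3 : ℂ) * (Real.sqrt 3 : ℂ) = 3 := by
    norm_cast
    rw [Real.mul_self_sqrt (by norm_num)]
  have hne : (Real.sqrt 3 : ℂ) ≠ 0 := by
    intro h
    rw [h, mul_zero] at hs
    norm_num at hs
  rw [div_mul_div_comm, Complex.I_mul_I, hs]

/-- The matrix with rows `(0,0,0,1),(0,0,1,1),(1,-1,0,0),(-1,0,0,0)` is in `Sp(4,ℤ)`,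
fixes `σ₅` under the symplectic action, and `N = Cσ₅ + D` has eigenvalues `i` and `-i`. -/
theorem stmt16 :
    letI A : Matrix (Fin 2) (Fin 2) ℤ := !![0, 0; 0, 0]
    letI B : Matrix (Fin 2) (Fin 2) ℤ := !![0, 1; 1, 1]
    letI C : Matrix (Fin 2) (Fin 2) ℤ := !![1, -1; -1, 0]
    letI D : Matrix (Fin 2) (Fin 2) ℤ := !![0, 0; 0, 0]
    Matrix.fromBlocks A B C D * symplJ 2 * (Matrix.fromBlocks A B C D)ᵀ = symplJ 2 ∧
    IsUnit (C.map (Int.cast : ℤ → ℂ) * sigma5 + D.map (Int.cast : ℤ → ℂ)) ∧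
    (A.map (Int.cast : ℤ → ℂ) * sigma5 + B.map (Int.cast : ℤ → ℂ)) *
      (C.map (Int.cast : ℤ → ℂ) * sigma5 + D.map (Int.cast : ℤ → ℂ))⁻¹ = sigma5 ∧
    (C.map (Int.cast : ℤ → ℂ) * sigma5 + D.map (Int.cast : ℤ → ℂ)).charpoly.roots =
      {Complex.I, -Complex.I} := by
  obtain ⟨t, ht⟩ : ∃ t : ℂ, t = Complex.I / Real.sqrt 3 := ⟨_, rfl⟩
  have ht2 : t * t = -1/3 := by rw [ht]; exact aux_t_sq
  have hsig : sigma5 = !![2*t, t; t, 2*t] := by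
    ext i j
    fin_cases i <;> fin_cases j <;> simp [sigma5, ht] <;> ring
  have hA : (!![0, 0; 0, 0] : Matrix (Fin 2) (Fin 2) ℤ).map (Int.cast : ℤ → ℂ) = 0 := by
    ext i j; fin_cases i <;> fin_cases j <;> simp
  have hB : (!![0, 1; 1, 1] : Matrix (Fin 2) (Fin 2) ℤ).map (Int.cast : ℤ → ℂ) =
      !![0, 1; 1, 1] := by
    ext i j; fin_cases i <;> fin_cases j <;> simp
  have hC : (!![1, -1; -1, 0] : Matrix (Fin 2) (Fin 2) ℤ).map (Int.cast : ℤ → ℂ) =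
      !![1, -1; -1, 0] := by
    ext i j; fin_cases i <;> fin_cases j <;> simp
  have entry : ∀ a b c d a' b' c' d' : ℂ, a = a' → b = b' → c = c' → d = d' →
      !![a, b; c, d] = !![a', b'; c', d'] := by
    intro a b c d a' b' c' d' h1 h2 h3 h4; rw [h1, h2, h3, h4]
  have hN : (!![1, -1; -1, 0] : Matrix (Fin 2) (Fin 2) ℤ).map (Int.cast : ℤ → ℂ) * sigma5 +
      (!![0, 0; 0, 0] : Matrix (Fin 2) (Fin 2) ℤ).map (Int.cast : ℤ → ℂ) =
      !![t, -t; -2*t, -t] := by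
    rw [hC, hA, hsig, Matrix.mul_fin_two, add_zero]
    exact entry _ _ _ _ _ _ _ _ (by ring) (by ring) (by ring) (by ring)
  have hdet : (!![t, -t; -2*t, -t]).det = 1 := by
    rw [Matrix.det_fin_two_of]; linear_combination (-3 : ℂ) * ht2
  have hunit : IsUnit (!![t, -t; -2*t, -t]) := by
    rw [Matrix.isUnit_iff_isUnit_det, hdet]; exact isUnit_one
  have hinv : (!![t, -t; -2*t, -t])⁻¹ = !![-t, t; 2*t, t] := by
    apply Matrix.inv_eq_right_inv
    rw [Matrix.mul_fin_two, Matrix.one_fin_two]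
    exact entry _ _ _ _ _ _ _ _ (by linear_combination (-3 : ℂ) * ht2) (by ring)
      (by ring) (by linear_combination (-3 : ℂ) * ht2)
  refine ⟨by decide, ?_, ?_, ?_⟩
  · rw [hN]; exact hunit
  · rw [hN, hinv, hA, hB, hsig, Matrix.zero_mul, zero_add, Matrix.mul_fin_two]
    exact entry _ _ _ _ _ _ _ _ (by ring) (by ring) (by ring) (by ring)
  · rw [hN]
    have hcp : (!![t, -t; -2*t, -t]).charpoly =
        (Polynomial.X - Polynomial.C Complex.I) * (Polynomial.X - Polynomial.C (-Complex.I)) := by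
      rw [Matrix.charpoly, Matrix.det_fin_two,
        Matrix.charmatrix_apply_eq, Matrix.charmatrix_apply_eq,
        Matrix.charmatrix_apply_ne _ _ _ (by decide : (0 : Fin 2) ≠ 1),
        Matrix.charmatrix_apply_ne _ _ _ (by decide : (1 : Fin 2) ≠ 0)]
      simp only [Matrix.cons_val_zero, Matrix.cons_val_one, Matrix.head_cons,
        Matrix.head_fin_const, Matrix.cons_val', Matrix.empty_val', Matrix.cons_val_fin_one,
        Matrix.of_apply, Polynomial.C_neg, Polynomial.C_mul, map_ofNat]
      have h9 : Polynomial.C t * Polynomial.C t * 3 = -1 := by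
        rw [← Polynomial.C_mul, ht2, show ((3:Polynomial ℂ) = Polynomial.C 3) from (map_ofNat _ 3).symm,
          ← Polynomial.C_mul, show (-1/3 : ℂ) * 3 = -1 by norm_num, map_neg, Polynomial.C_1]
      have h10 : Polynomial.C Complex.I * Polynomial.C Complex.I = -1 := by
        rw [← Polynomial.C_mul, Complex.I_mul_I, map_neg, Polynomial.C_1]
      linear_combination (-1 : Polynomial ℂ) * h9 + h10
    rw [hcp, Polynomial.roots_mul, Polynomial.roots_X_sub_C, Polynomial.roots_X_sub_C]
    · rfl
    · exact mul_ne_zero (Polynomial.X_sub_C_ne_zero _) (Polynomial.X_sub_C_ne_zero _)
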